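/- arXiv:2605.04364 — 2 statements merged into one kernel-verified Lean document; each statement's English description precedes it below -/
import Mathlib

section
/- Let z_t ∈ ℝ^d, y_t ∈ ℝ^p for t = 1,…,T, let λ > 0, and let M_t^{ols} := B_{t-1} G_{t-1}⁻¹ with B_{t-1} := ∑_{s=1}^{t-1} y_s z_sᵀ and G_t := λ I + ∑_{s=1}^t z_s z_sᵀ. Then for every comparator M ∈ ℝ^{p×d}, ∑_{t=1}^T ‖M_t^{ols} z_t − y_t‖² − ∑_{t=1}^T ‖M z_t − y_t‖² ≤ λ‖M‖_F² + ∑_{t=1}^T ‖y_t − M_t^{ols} z_t‖² · z_tᵀ G_t⁻¹ z_t ≤ λ‖M‖_F² + (max_{1≤t≤T} ‖y_t − M_t^{ols} z_t‖²) · d · log(1 + (∑_{t=1}^T ‖z_t‖²)/(λ d)). -/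
/-!
Write `G_t`, `B_t` for the regularized Gram and cross-covariance matrices, `M_t = B_{t-1} G_{t-1}⁻¹`
and `r_t = y_t - M_t z_t`. Since `B_t = M_t G_t + r_t z_tᵀ`, expanding the potential
`Φ_t = tr (B_t G_t⁻¹ B_tᵀ)` gives the one-step identity
`‖r_t‖² (1 - z_tᵀ G_t⁻¹ z_t) = ‖y_t‖² - (Φ_t - Φ_{t-1})`. Summing over `t`, the OLS loss minus the
leverage-weighted losses equals `∑ ‖y_t‖² - Φ_T`, and completing the square,
`tr ((M - B_T G_T⁻¹) G_T (M - B_T G_T⁻¹)ᵀ) ≥ 0`, bounds this by the regularized loss of any `M`.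

For the second inequality, the matrix determinant lemma gives
`1 - z_tᵀ G_t⁻¹ z_t = det G_{t-1} / det G_t`, so by `1 - 1/x ≤ log x` each leverage is at most
`log det G_t - log det G_{t-1}`. The sum telescopes, and concavity of `log` on the eigenvalues of
`G_T`, whose trace is `λ d + ∑ ‖z_t‖²`, bounds `log det G_T`.
-/

open Matrix Finset

theorem Finset.sum_mul_le_sup'_mul_sum {ι R : Type*} [Semiring R] [LinearOrder R]
    [IsOrderedRing R] {s : Finset ι} (hs : s.Nonempty) (f g : ι → R) (hg : ∀ i ∈ s, 0 ≤ g i) :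
    ∑ i ∈ s, f i * g i ≤ s.sup' hs f * ∑ i ∈ s, g i := by
  rw [mul_sum]
  exact sum_le_sum fun i hi => mul_le_mul_of_nonneg_right (le_sup' f hi) (hg i hi)

theorem dotProduct_self_nonneg {n : Type*} [Fintype n] (v : n → ℝ) : 0 ≤ v ⬝ᵥ v := by
  simpa using dotProduct_self_star_nonneg v

theorem Real.sum_log_le_card_mul_log_sum_div {ι : Type*} (s : Finset ι) {f : ι → ℝ}
    (hf : ∀ i ∈ s, 0 < f i) :
    ∑ i ∈ s, Real.log (f i) ≤ #s * Real.log ((∑ i ∈ s, f i) / #s) := by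
  rcases s.eq_empty_or_nonempty with rfl | hs
  · simp
  have hcard : (0 : ℝ) < #s := by exact_mod_cast hs.card_pos
  have hw : ∑ _i ∈ s, (#s : ℝ)⁻¹ = 1 := by
    rw [sum_const, nsmul_eq_mul, mul_inv_cancel₀ hcard.ne']
  have := strictConcaveOn_log_Ioi.concaveOn.le_map_sum (fun _ _ => inv_nonneg.2 hcard.le) hw hf
  simp only [smul_eq_mul] at this
  rw [← mul_sum, ← mul_sum, inv_mul_eq_div, inv_mul_eq_div] at this
  rwa [← div_le_iff₀' hcard]

section LinearAlgebra

variable {m n R : Type*}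

theorem Matrix.PosDef.transpose_eq_self {A : Matrix n n ℝ} (hA : A.PosDef) : Aᵀ = A := by
  simpa [conjTranspose_eq_transpose_of_trivial] using hA.isHermitian.eq

variable [Fintype m] [Fintype n] [CommRing R]

theorem Matrix.trace_mul_vecMulVec_mul_transpose (M : Matrix m n R) (u v : n → R) :
    trace (M * vecMulVec u v * Mᵀ) = (M *ᵥ u) ⬝ᵥ (M *ᵥ v) := by
  rw [mul_vecMulVec, vecMulVec_mul, ← mulVec_transpose, transpose_transpose, trace_vecMulVec]

theorem Matrix.trace_add_vecMulVec_mul_mul_transpose {S : Matrix n n R} (hS : Sᵀ = S)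
    (X : Matrix m n R) (r : m → R) (z : n → R) :
    trace ((X + vecMulVec r z) * S * (X + vecMulVec r z)ᵀ) =
      trace (X * S * Xᵀ) + 2 * ((X * S) *ᵥ z ⬝ᵥ r) + (z ⬝ᵥ S *ᵥ z) * (r ⬝ᵥ r) := by
  have hcross : trace (X * S * (vecMulVec r z)ᵀ) = (X * S) *ᵥ z ⬝ᵥ r := by
    rw [transpose_vecMulVec, mul_vecMulVec, trace_vecMulVec]
  have hcross' : trace (vecMulVec r z * S * Xᵀ) = (X * S) *ᵥ z ⬝ᵥ r := by
    rw [← hcross, ← trace_transpose, transpose_mul, transpose_mul, hS, transpose_transpose,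
      Matrix.mul_assoc]
  have hsq : trace (vecMulVec r z * S * (vecMulVec r z)ᵀ) = (z ⬝ᵥ S *ᵥ z) * (r ⬝ᵥ r) := by
    rw [transpose_vecMulVec, vecMulVec_mul, vecMulVec_mul_vecMulVec, trace_vecMulVec,
      dotProduct_smul, ← dotProduct_mulVec, smul_eq_mul]
  simp only [transpose_add, Matrix.add_mul, Matrix.mul_add, trace_add, hcross, hsq, hcross']
  ring

theorem Matrix.det_add_vecMulVec [DecidableEq n] {A : Matrix n n R} (hA : IsUnit A.det)
    (u v : n → R) : (A + vecMulVec u v).det = A.det * (1 + v ⬝ᵥ A⁻¹ *ᵥ u) := by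
  have : A + vecMulVec u v = A * (1 + vecMulVec (A⁻¹ *ᵥ u) v) := by
    rw [Matrix.mul_add, Matrix.mul_one, mul_vecMulVec, mulVec_mulVec, mul_nonsing_inv A hA,
      one_mulVec]
  rw [this, det_mul, vecMulVec_eq Unit, det_one_add_replicateCol_mul_replicateRow]

theorem Matrix.PosDef.add_vecMulVec_self {A : Matrix n n ℝ} (hA : A.PosDef) (z : n → ℝ) :
    (A + vecMulVec z z).PosDef :=
  hA.add_posSemidef (by simpa using posSemidef_vecMulVec_self_star z)

variable [DecidableEq n]

theorem sq_residual_mul_one_sub_leverage {A : Matrix n n ℝ} (hA : A.PosDef) (B : Matrix m n ℝ)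
    (z : n → ℝ) (y : m → ℝ) :
    (y - (B * A⁻¹) *ᵥ z) ⬝ᵥ (y - (B * A⁻¹) *ᵥ z) * (1 - z ⬝ᵥ (A + vecMulVec z z)⁻¹ *ᵥ z) =
      y ⬝ᵥ y - trace ((B + vecMulVec y z) * (A + vecMulVec z z)⁻¹ * (B + vecMulVec y z)ᵀ)
        + trace (B * A⁻¹ * Bᵀ) := by
  obtain ⟨M, rfl⟩ : ∃ M, B = M * A :=
    ⟨B * A⁻¹, (nonsing_inv_mul_cancel_right A B hA.det_pos.ne'.isUnit).symm⟩
  have hA' := hA.add_vecMulVec_self z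
  have hB' : M * A + vecMulVec y z = M * (A + vecMulVec z z) + vecMulVec (y - M *ᵥ z) z := by
    rw [Matrix.mul_add, mul_vecMulVec, add_assoc, ← add_vecMulVec, add_sub_cancel]
  rw [mul_nonsing_inv_cancel_right A M hA.det_pos.ne'.isUnit, hB',
    trace_add_vecMulVec_mul_mul_transpose hA'.inv.transpose_eq_self,
    mul_nonsing_inv_cancel_right _ M hA'.det_pos.ne'.isUnit]
  simp only [transpose_mul, transpose_add, transpose_vecMulVec, hA.transpose_eq_self,
    Matrix.mul_add, ← Matrix.mul_assoc, trace_add, trace_mul_vecMulVec_mul_transpose,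
    dotProduct_sub, sub_dotProduct, dotProduct_comm y (M *ᵥ z)]
  ring

theorem two_mul_trace_mul_transpose_sub_le {A : Matrix n n ℝ} (hA : A.PosDef)
    (M B : Matrix m n ℝ) :
    2 * trace (M * Bᵀ) - trace (M * A * Mᵀ) ≤ trace (B * A⁻¹ * Bᵀ) := by
  have hsq := (hA.posSemidef.mul_mul_conjTranspose_same (M - B * A⁻¹)).trace_nonneg
  have hBM : trace (B * Mᵀ) = trace (M * Bᵀ) := by
    rw [← trace_transpose, transpose_mul, transpose_transpose]
  have hA₀ := hA.det_pos.ne'.isUnit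
  simp only [conjTranspose_eq_transpose_of_trivial, transpose_sub, transpose_mul,
    transpose_nonsing_inv, hA.transpose_eq_self, Matrix.sub_mul, Matrix.mul_sub, trace_sub,
    ← Matrix.mul_assoc, nonsing_inv_mul_cancel_right _ _ hA₀, mul_nonsing_inv_cancel_right _ _ hA₀,
    hBM] at hsq
  linarith

theorem leverage_le_log_det_sub {A : Matrix n n ℝ} (hA : A.PosDef) (z : n → ℝ) :
    z ⬝ᵥ (A + vecMulVec z z)⁻¹ *ᵥ z ≤ Real.log (A + vecMulVec z z).det - Real.log A.det := by
  have hA' := hA.add_vecMulVec_self z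
  have hdet : A.det = (A + vecMulVec z z).det * (1 - z ⬝ᵥ (A + vecMulVec z z)⁻¹ *ᵥ z) := by
    conv_lhs => rw [← add_neg_cancel_right A (vecMulVec z z), ← neg_vecMulVec]
    rw [det_add_vecMulVec hA'.det_pos.ne'.isUnit, mulVec_neg, dotProduct_neg, ← sub_eq_add_neg]
  have hratio : A.det / (A + vecMulVec z z).det = 1 - z ⬝ᵥ (A + vecMulVec z z)⁻¹ *ᵥ z := by
    rw [hdet, mul_div_cancel_left₀ _ hA'.det_pos.ne']
  have := Real.one_sub_inv_le_log_of_pos (div_pos hA'.det_pos hA.det_pos)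
  rw [Real.log_div hA'.det_pos.ne' hA.det_pos.ne', inv_div, hratio] at this
  linarith

theorem Matrix.PosDef.log_det_le {A : Matrix n n ℝ} (hA : A.PosDef) :
    Real.log A.det ≤ Fintype.card n * Real.log (A.trace / Fintype.card n) := by
  have hdet : A.det = ∏ i, hA.isHermitian.eigenvalues i := by
    simpa using hA.isHermitian.det_eq_prod_eigenvalues
  have htr : A.trace = ∑ i, hA.isHermitian.eigenvalues i := by
    simpa using hA.isHermitian.trace_eq_sum_eigenvalues
  rw [hdet, htr, Real.log_prod fun i _ => (hA.eigenvalues_pos i).ne', ← card_univ]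
  exact Real.sum_log_le_card_mul_log_sum_div univ fun i _ => hA.eigenvalues_pos i

end LinearAlgebra

section OnlineLeastSquares

variable {m n : Type*}

def crossGram (y : ℕ → m → ℝ) (z : ℕ → n → ℝ) (t : ℕ) : Matrix m n ℝ :=
  ∑ s ∈ Icc 1 t, vecMulVec (y s) (z s)

theorem crossGram_succ (y : ℕ → m → ℝ) (z : ℕ → n → ℝ) (t : ℕ) :
    crossGram y z (t + 1) = crossGram y z t + vecMulVec (y (t + 1)) (z (t + 1)) :=
  sum_Icc_succ_top (by omega) _

variable [DecidableEq n]

def regularizedGram (lam : ℝ) (z : ℕ → n → ℝ) (t : ℕ) : Matrix n n ℝ :=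
  lam • 1 + ∑ s ∈ Icc 1 t, vecMulVec (z s) (z s)

theorem regularizedGram_succ (lam : ℝ) (z : ℕ → n → ℝ) (t : ℕ) :
    regularizedGram lam z (t + 1) =
      regularizedGram lam z t + vecMulVec (z (t + 1)) (z (t + 1)) := by
  rw [regularizedGram, regularizedGram, sum_Icc_succ_top (by omega), add_assoc]

variable [Fintype m] [Fintype n]

noncomputable def olsPredictor (lam : ℝ) (y : ℕ → m → ℝ) (z : ℕ → n → ℝ) (t : ℕ) :
    Matrix m n ℝ :=
  crossGram y z (t - 1) * (regularizedGram lam z (t - 1))⁻¹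

variable {lam : ℝ} (y : ℕ → m → ℝ) (z : ℕ → n → ℝ)

theorem regularizedGram_posDef (hlam : 0 < lam) (t : ℕ) : (regularizedGram lam z t).PosDef :=
  (PosDef.one.smul hlam).add_posSemidef
    (posSemidef_sum _ fun s _ => by simpa using posSemidef_vecMulVec_self_star (z s))

theorem sum_sq_residual_mul_one_sub_leverage (hlam : 0 < lam) (T : ℕ) :
    ∑ t ∈ Icc 1 T, (y t - olsPredictor lam y z t *ᵥ z t) ⬝ᵥ (y t - olsPredictor lam y z t *ᵥ z t)
        * (1 - z t ⬝ᵥ (regularizedGram lam z t)⁻¹ *ᵥ z t) =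
      ∑ t ∈ Icc 1 T, y t ⬝ᵥ y t -
        trace (crossGram y z T * (regularizedGram lam z T)⁻¹ * (crossGram y z T)ᵀ) := by
  induction T with
  | zero => simp [crossGram]
  | succ T ih =>
    rw [sum_Icc_succ_top (by omega), sum_Icc_succ_top (by omega), ih, regularizedGram_succ,
      crossGram_succ, olsPredictor, Nat.add_sub_cancel,
      sq_residual_mul_one_sub_leverage (regularizedGram_posDef z hlam T)]
    ring

theorem sum_sq_sub_trace_le (hlam : 0 < lam) (M : Matrix m n ℝ) (T : ℕ) :
    ∑ t ∈ Icc 1 T, y t ⬝ᵥ y t -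
        trace (crossGram y z T * (regularizedGram lam z T)⁻¹ * (crossGram y z T)ᵀ) ≤
      lam * ∑ i, ∑ j, M i j ^ 2 + ∑ t ∈ Icc 1 T, (M *ᵥ z t - y t) ⬝ᵥ (M *ᵥ z t - y t) := by
  have hquad : trace (M * regularizedGram lam z T * Mᵀ) =
      lam * ∑ i, ∑ j, M i j ^ 2 + ∑ t ∈ Icc 1 T, (M *ᵥ z t) ⬝ᵥ (M *ᵥ z t) := by
    have hfrob : trace (M * Mᵀ) = ∑ i, ∑ j, M i j ^ 2 := by simp [trace, mul_apply, sq]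
    simp only [regularizedGram, Matrix.mul_add, Matrix.add_mul, Matrix.mul_smul, Matrix.smul_mul,
      Matrix.mul_one, trace_add, trace_smul, Matrix.mul_sum, Matrix.sum_mul, trace_sum,
      trace_mul_vecMulVec_mul_transpose, hfrob, smul_eq_mul]
  have hlin : trace (M * (crossGram y z T)ᵀ) = ∑ t ∈ Icc 1 T, (M *ᵥ z t) ⬝ᵥ y t := by
    simp [crossGram, transpose_sum, Matrix.mul_sum, trace_sum, transpose_vecMulVec, mul_vecMulVec]
  have hexpand : ∀ t, (M *ᵥ z t - y t) ⬝ᵥ (M *ᵥ z t - y t) =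
      (M *ᵥ z t) ⬝ᵥ (M *ᵥ z t) - 2 * ((M *ᵥ z t) ⬝ᵥ y t) + y t ⬝ᵥ y t := fun t => by
    rw [dotProduct_sub, sub_dotProduct, sub_dotProduct, dotProduct_comm (y t)]
    ring
  have := two_mul_trace_mul_transpose_sub_le (regularizedGram_posDef z hlam T) M (crossGram y z T)
  rw [hquad, hlin] at this
  rw [sum_congr rfl fun t _ => hexpand t, sum_add_distrib, sum_sub_distrib, ← mul_sum]
  linarith

theorem sum_leverage_le_log_det_sub (hlam : 0 < lam) (T : ℕ) :
    ∑ t ∈ Icc 1 T, z t ⬝ᵥ (regularizedGram lam z t)⁻¹ *ᵥ z t ≤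
      Real.log (regularizedGram lam z T).det - Real.log (regularizedGram lam z 0).det := by
  induction T with
  | zero => simp
  | succ T ih =>
    rw [sum_Icc_succ_top (by omega), regularizedGram_succ]
    have := leverage_le_log_det_sub (regularizedGram_posDef z hlam T) (z (T + 1))
    linarith

theorem log_det_regularizedGram_sub_le (hlam : 0 < lam) (T : ℕ) :
    Real.log (regularizedGram lam z T).det - Real.log (regularizedGram lam z 0).det ≤
      Fintype.card n * Real.log (1 + (∑ t ∈ Icc 1 T, z t ⬝ᵥ z t) / (lam * Fintype.card n)) := by
  have htrace :
      trace (regularizedGram lam z T) = lam * Fintype.card n + ∑ t ∈ Icc 1 T, z t ⬝ᵥ z t := by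
    simp [regularizedGram, trace_add, trace_sum]
  have hdet₀ : (regularizedGram lam z 0).det = lam ^ Fintype.card n := by
    simp [regularizedGram]
  have := (regularizedGram_posDef z hlam T).log_det_le
  rw [htrace] at this
  rw [hdet₀, Real.log_pow]
  rcases (Fintype.card n).eq_zero_or_pos with hd | hd
  · simp_all
  have hS : 0 ≤ ∑ t ∈ Icc 1 T, z t ⬝ᵥ z t :=
    sum_nonneg fun t _ => dotProduct_self_nonneg (z t)
  have hsplit : (lam * Fintype.card n + ∑ t ∈ Icc 1 T, z t ⬝ᵥ z t) / Fintype.card n =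
      lam * (1 + (∑ t ∈ Icc 1 T, z t ⬝ᵥ z t) / (lam * Fintype.card n)) := by
    field_simp
  rw [hsplit, Real.log_mul hlam.ne' (by positivity), mul_add] at this
  linarith

end OnlineLeastSquares

/-- the classical regret bound for regularized online least squares.
With `G_t = λI + ∑_{s≤t} z_s z_sᵀ`, `B_{t-1} = ∑_{s<t} y_s z_sᵀ`, and OLS iterate
`M_t^{ols} = B_{t-1} G_{t-1}⁻¹`, for every comparator `M`,
`∑‖M_t^{ols} z_t − y_t‖² − ∑‖M z_t − y_t‖²
   ≤ λ‖M‖_F² + ∑ ‖y_t − M_t^{ols} z_t‖² · z_tᵀG_t⁻¹z_t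
   ≤ λ‖M‖_F² + (max_t ‖y_t − M_t^{ols} z_t‖²) · d · log(1 + ∑‖z_t‖²/(λd))`. -/
theorem ols_regret
    (d p T : ℕ) (hT : 1 ≤ T) (lam : ℝ) (hlam : 0 < lam)
    (z : ℕ → Fin d → ℝ) (y : ℕ → Fin p → ℝ)
    (G : ℕ → Matrix (Fin d) (Fin d) ℝ)
    (hG : ∀ t, G t = lam • (1 : Matrix (Fin d) (Fin d) ℝ) +
      ∑ s ∈ Finset.Icc 1 t, Matrix.vecMulVec (z s) (z s))
    (B : ℕ → Matrix (Fin p) (Fin d) ℝ)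
    (hB : ∀ t, B t = ∑ s ∈ Finset.Icc 1 t, Matrix.vecMulVec (y s) (z s))
    (Mols : ℕ → Matrix (Fin p) (Fin d) ℝ)
    (hM : ∀ t, Mols t = B (t - 1) * (G (t - 1))⁻¹)
    (M : Matrix (Fin p) (Fin d) ℝ) :
    (∑ t ∈ Finset.Icc 1 T,
        dotProduct ((Mols t).mulVec (z t) - y t) ((Mols t).mulVec (z t) - y t)
      - ∑ t ∈ Finset.Icc 1 T,
        dotProduct (M.mulVec (z t) - y t) (M.mulVec (z t) - y t)
    ≤ lam * (∑ i, ∑ j, (M i j) ^ 2)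
      + ∑ t ∈ Finset.Icc 1 T,
          dotProduct (y t - (Mols t).mulVec (z t)) (y t - (Mols t).mulVec (z t))
            * dotProduct (z t) ((G t)⁻¹.mulVec (z t))) ∧
    (lam * (∑ i, ∑ j, (M i j) ^ 2)
      + ∑ t ∈ Finset.Icc 1 T,
          dotProduct (y t - (Mols t).mulVec (z t)) (y t - (Mols t).mulVec (z t))
            * dotProduct (z t) ((G t)⁻¹.mulVec (z t))
    ≤ lam * (∑ i, ∑ j, (M i j) ^ 2)
      + ((Finset.Icc 1 T).sup' (Finset.nonempty_Icc.mpr hT)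
            (fun t => dotProduct (y t - (Mols t).mulVec (z t))
              (y t - (Mols t).mulVec (z t))))
        * d * Real.log (1 + (∑ t ∈ Finset.Icc 1 T, dotProduct (z t) (z t)) / (lam * d))) := by
  obtain rfl : G = regularizedGram lam z := funext hG
  obtain rfl : B = crossGram y z := funext hB
  obtain rfl : Mols = olsPredictor lam y z := funext hM
  have hloss := sum_sq_residual_mul_one_sub_leverage y z hlam T
  have hcomp := sum_sq_sub_trace_le y z hlam M T
  have hflip : ∀ u v : Fin p → ℝ, (u - v) ⬝ᵥ (u - v) = (v - u) ⬝ᵥ (v - u) := fun u v => by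
    rw [← neg_sub, neg_dotProduct, dotProduct_neg, neg_neg]
  simp only [mul_one_sub, sum_sub_distrib] at hloss
  refine ⟨by simp only [hflip (olsPredictor lam y z _ *ᵥ z _)]; linarith, ?_⟩
  have hlev :=
    (sum_leverage_le_log_det_sub z hlam T).trans (log_det_regularizedGram_sub_le z hlam T)
  rw [Fintype.card_fin] at hlev
  refine add_le_add le_rfl
    ((sum_mul_le_sup'_mul_sum (nonempty_Icc.mpr hT) _ _ fun t _ => ?_).trans ?_)
  · simpa using (regularizedGram_posDef z hlam t).inv.posSemidef.dotProduct_mulVec_nonneg (z t)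
  rw [mul_assoc]
  exact mul_le_mul_of_nonneg_left hlev
    (le_sup'_of_le _ (right_mem_Icc.mpr hT) (dotProduct_self_nonneg _))
end

section
/- Let A ∈ ℝ^{n×n} be diagonalizable with all eigenvalues real and contained in [−1, 1], i.e., A = S D S⁻¹ with D diagonal and real entries in [−1, 1], and set κ_A := ‖S‖ ‖S⁻¹‖. Then ∑_{s=0}^∞ ‖(A² − I) A^s‖ ≤ 2 n κ_A, where ‖·‖ is the operator norm. -/
/-!
Conjugating by `S` turns `(A² - 1) A^s` into `S (D² - 1) D^s S⁻¹`, whose operator norm is at most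
`κ_A ∑ᵢ |dᵢ² - 1| |dᵢ|^s`. For `|d| < 1` the series `∑ₛ (1 - d²) |d|^s` is geometric with sum
`(1 - d²) / (1 - |d|) = 1 + |d| ≤ 2`, and for `|d| = 1` its terms vanish, so each eigenvalue
contributes at most `2`.
-/

/-- The operator norm of a matrix induced by the Euclidean (ℓ²) norms. -/
noncomputable def opNorm {𝕜 : Type*} [RCLike 𝕜] {m n : Type*} [Fintype m] [Fintype n]
    [DecidableEq n] (A : Matrix m n 𝕜) : ℝ :=
  ‖LinearMap.toContinuousLinearMap (Matrix.toEuclideanLin A)‖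

open Matrix
open scoped Matrix.Norms.L2Operator

lemma opNorm_eq_l2_opNorm {𝕜 : Type*} [RCLike 𝕜] {m n : Type*} [Fintype m] [Fintype n]
    [DecidableEq n] (A : Matrix m n 𝕜) : opNorm A = ‖A‖ := rfl

lemma Units.conj_sq_sub_one_mul_pow {R : Type*} [Ring R] (u : Rˣ) (d : R) (s : ℕ) :
    (((u : R) * d * ↑u⁻¹) ^ 2 - 1) * ((u : R) * d * ↑u⁻¹) ^ s
      = (u : R) * ((d ^ 2 - 1) * d ^ s) * ↑u⁻¹ := by
  have hconj : ∀ x, (u : R) * x * ↑u⁻¹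
      = MulSemiringAction.toRingHom (ConjAct Rˣ) R (ConjAct.toConjAct u) x := fun _ => rfl
  rw [hconj, hconj, map_mul, map_sub, map_pow, map_pow, map_one]

lemma Matrix.l2_opNorm_diagonal_le_sum {𝕜 n : Type*} [RCLike 𝕜] [Fintype n] [DecidableEq n]
    (v : n → 𝕜) : ‖diagonal v‖ ≤ ∑ i, ‖v i‖ := by
  rw [l2_opNorm_diagonal]
  exact (pi_norm_le_iff_of_nonneg (by positivity)).2 fun i =>
    Finset.single_le_sum (f := fun i => ‖v i‖) (fun _ _ => norm_nonneg _) (Finset.mem_univ i)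

lemma Matrix.l2_opNorm_mul_diagonal_mul_le {𝕜 n : Type*} [RCLike 𝕜] [Fintype n] [DecidableEq n]
    (S S' : Matrix n n 𝕜) (v : n → 𝕜) :
    ‖S * diagonal v * S'‖ ≤ ‖S‖ * ‖S'‖ * ∑ i, ‖v i‖ :=
  calc ‖S * diagonal v * S'‖ ≤ ‖S‖ * ‖diagonal v‖ * ‖S'‖ :=
        (norm_mul_le _ _).trans (by gcongr; exact norm_mul_le _ _)
    _ ≤ ‖S‖ * (∑ i, ‖v i‖) * ‖S'‖ := by gcongr; exact l2_opNorm_diagonal_le_sum v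
    _ = ‖S‖ * ‖S'‖ * ∑ i, ‖v i‖ := by ring

lemma Matrix.diagonal_sq_sub_one_mul_pow {R n : Type*} [CommRing R] [Fintype n] [DecidableEq n]
    (d : n → R) (s : ℕ) :
    (diagonal d ^ 2 - 1) * diagonal d ^ s = diagonal fun i => (d i ^ 2 - 1) * d i ^ s := by
  rw [diagonal_pow, diagonal_pow, ← diagonal_one, diagonal_sub, diagonal_mul_diagonal]
  rfl

lemma hasSum_abs_sq_sub_one_mul_pow {x : ℝ} (hx : |x| < 1) :
    HasSum (fun s : ℕ => |(x ^ 2 - 1) * x ^ s|) (1 + |x|) := by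
  have hterm : ∀ s : ℕ, |(x ^ 2 - 1) * x ^ s| = (1 - |x| ^ 2) * |x| ^ s := fun s => by
    rw [abs_mul, abs_pow, abs_sub_comm, sq_abs,
      abs_of_nonneg (by nlinarith [abs_nonneg x, sq_abs x])]
  have hsum : (1 - |x| ^ 2) * (1 - |x|)⁻¹ = 1 + |x| := by
    field_simp [(by linarith : (1 - |x|) ≠ 0)]; ring
  rw [← hsum, funext hterm]
  exact (hasSum_geometric_of_lt_one (abs_nonneg x) hx).mul_left _

lemma summable_abs_sq_sub_one_mul_pow_and_tsum_le_two {x : ℝ} (hx : |x| ≤ 1) :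
    Summable (fun s : ℕ => |(x ^ 2 - 1) * x ^ s|) ∧ ∑' s : ℕ, |(x ^ 2 - 1) * x ^ s| ≤ 2 := by
  rcases hx.lt_or_eq with hlt | heq
  · have h := hasSum_abs_sq_sub_one_mul_pow hlt
    exact ⟨h.summable, h.tsum_eq ▸ by linarith⟩
  · have hx2 : x ^ 2 - 1 = 0 := by rw [← sq_abs, heq]; norm_num
    simp [hx2]

lemma summable_sum_abs_sq_sub_one_mul_pow_and_tsum_le {ι : Type*} [Fintype ι] {d : ι → ℝ}
    (hd : ∀ i, |d i| ≤ 1) :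
    Summable (fun s : ℕ => ∑ i, |(d i ^ 2 - 1) * d i ^ s|) ∧
      ∑' s : ℕ, ∑ i, |(d i ^ 2 - 1) * d i ^ s| ≤ 2 * (Fintype.card ι : ℝ) := by
  have h := fun i => summable_abs_sq_sub_one_mul_pow_and_tsum_le_two (hd i)
  refine ⟨summable_sum fun i _ => (h i).1, ?_⟩
  rw [Summable.tsum_finsetSum fun i _ => (h i).1]
  calc ∑ i, ∑' s : ℕ, |(d i ^ 2 - 1) * d i ^ s| ≤ ∑ _i : ι, (2 : ℝ) :=
        Finset.sum_le_sum fun i _ => (h i).2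
    _ = 2 * (Fintype.card ι : ℝ) := by simp [mul_comm]

/-- the filtered Jordan bound in the diagonalizable case.  If
`A = S D S⁻¹` with `D` diagonal with real entries in `[−1,1]`, and
`κ_A = ‖S‖‖S⁻¹‖`, then `∑_{s=0}^∞ ‖(A² − I) A^s‖ ≤ 2 n κ_A`. -/
theorem filtered_jordan_bound_diagonalizable
    (n : ℕ) (A S S' : Matrix (Fin n) (Fin n) ℝ) (dvec : Fin n → ℝ)
    (hd : ∀ i, dvec i ∈ Set.Icc (-1 : ℝ) 1)
    (hSS' : S * S' = 1) (hS'S : S' * S = 1)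
    (hA : A = S * Matrix.diagonal dvec * S')
    (κA : ℝ) (hκ : κA = opNorm S * opNorm S') :
    Summable (fun s : ℕ => opNorm ((A ^ 2 - 1) * A ^ s)) ∧
    (∑' s : ℕ, opNorm ((A ^ 2 - 1) * A ^ s)) ≤ 2 * n * κA := by
  let u : (Matrix (Fin n) (Fin n) ℝ)ˣ := ⟨S, S', hSS', hS'S⟩
  have hterm : ∀ s : ℕ,
      opNorm ((A ^ 2 - 1) * A ^ s) ≤ κA * ∑ i, |(dvec i ^ 2 - 1) * dvec i ^ s| := fun s => by
    have hconj : (A ^ 2 - 1) * A ^ s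
        = S * diagonal (fun i => (dvec i ^ 2 - 1) * dvec i ^ s) * S' := by
      rw [hA, ← diagonal_sq_sub_one_mul_pow]
      exact Units.conj_sq_sub_one_mul_pow u _ s
    simpa only [hconj, hκ, opNorm_eq_l2_opNorm, Real.norm_eq_abs] using
      l2_opNorm_mul_diagonal_mul_le S S' _
  obtain ⟨hsummable, htsum⟩ :=
    summable_sum_abs_sq_sub_one_mul_pow_and_tsum_le fun i => abs_le.2 (hd i)
  have hκ0 : 0 ≤ κA := hκ ▸ mul_nonneg (norm_nonneg _) (norm_nonneg _)
  have hdom := hsummable.mul_left κA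
  have hsum := hdom.of_nonneg_of_le (fun _ => norm_nonneg _) hterm
  refine ⟨hsum, ?_⟩
  calc ∑' s : ℕ, opNorm ((A ^ 2 - 1) * A ^ s)
      ≤ ∑' s : ℕ, κA * ∑ i, |(dvec i ^ 2 - 1) * dvec i ^ s| := hsum.tsum_le_tsum hterm hdom
    _ = κA * ∑' s : ℕ, ∑ i, |(dvec i ^ 2 - 1) * dvec i ^ s| := tsum_mul_left
    _ ≤ κA * (2 * (Fintype.card (Fin n) : ℝ)) := by gcongr
    _ = 2 * n * κA := by rw [Fintype.card_fin]; ring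
end
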